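/- Optimality transfer inequality: let F(u) = (1/2)‖u - v‖², G(d) = ‖d‖₁, and suppose uᵏ⁺¹ - v = (λ₁/μ₁)div_w b_wᵏ - (λ₂/μ₂)(∇ₓᵀb_xᵏ + ∇ᵧᵀb_yᵏ), with (λ₁/μ₁)b_wᵏ ∈ ∂G(d_wᵏ), (λ₂/μ₂)b_xᵏ ∈ ∂G(d_xᵏ), (λ₂/μ₂)b_yᵏ ∈ ∂G(d_yᵏ). Then for every w: ‖d_wᵏ‖₁ + ‖d_xᵏ‖₁ + ‖d_yᵏ‖₁ + F(uᵏ⁺¹) ≤ ‖d_wᵏ + ∇_w w‖₁ + ‖d_xᵏ + ∇ₓw‖₁ + ‖d_yᵏ + ∇ᵧw‖₁ + F(uᵏ⁺¹ + w). -/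
import Mathlib


open scoped RealInnerProductSpace

noncomputable def l1 {m : ℕ} (x : EuclideanSpace ℝ (Fin m)) : ℝ := ∑ i, |x i|

theorem optimality_transfer_inequality {N m : ℕ}
    (lam1 lam2 mu1 mu2 : ℝ) (h1 : 0 < lam1) (h2 : 0 < lam2) (h3 : 0 < mu1) (h4 : 0 < mu2)
    (gw gx gy : EuclideanSpace ℝ (Fin N) →ₗ[ℝ] EuclideanSpace ℝ (Fin m))
    (divw gxT gyT : EuclideanSpace ℝ (Fin m) →ₗ[ℝ] EuclideanSpace ℝ (Fin N))
    (hdiv : ∀ p q, ⟪divw p, q⟫ = -⟪p, gw q⟫)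
    (hgxT : ∀ p q, ⟪gxT p, q⟫ = ⟪p, gx q⟫)
    (hgyT : ∀ p q, ⟪gyT p, q⟫ = ⟪p, gy q⟫)
    (v uk1 : EuclideanSpace ℝ (Fin N)) (dw dx dy bw bx bY : EuclideanSpace ℝ (Fin m))
    (huk : uk1 - v = (lam1 / mu1) • divw bw - (lam2 / mu2) • (gxT bx + gyT bY))
    (hsw : ∀ e, l1 e ≥ l1 dw + ⟪(lam1 / mu1) • bw, e - dw⟫)
    (hsx : ∀ e, l1 e ≥ l1 dx + ⟪(lam2 / mu2) • bx, e - dx⟫)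
    (hsy : ∀ e, l1 e ≥ l1 dy + ⟪(lam2 / mu2) • bY, e - dy⟫) :
    ∀ w : EuclideanSpace ℝ (Fin N),
      l1 dw + l1 dx + l1 dy + (1 / 2) * ‖uk1 - v‖ ^ 2 ≤
        l1 (dw + gw w) + l1 (dx + gx w) + l1 (dy + gy w)
          + (1 / 2) * ‖uk1 + w - v‖ ^ 2 := by
  intro w
  have Aw := hsw (dw + gw w)
  have Ax := hsx (dx + gx w)
  have Ay := hsy (dy + gy w)
  simp only [add_sub_cancel_left] at Aw Ax Ay
  have hinner : ⟪uk1 - v, w⟫ =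
      -(⟪(lam1 / mu1) • bw, gw w⟫ + ⟪(lam2 / mu2) • bx, gx w⟫
        + ⟪(lam2 / mu2) • bY, gy w⟫) := by
    rw [huk]
    simp only [inner_sub_left, inner_smul_left, inner_add_left, hdiv, hgxT, hgyT,
      RCLike.ofReal_real_eq_id, id]
    ring
  have hnorm : ‖uk1 + w - v‖ ^ 2 = ‖uk1 - v‖ ^ 2 + 2 * ⟪uk1 - v, w⟫ + ‖w‖ ^ 2 := by
    have : uk1 + w - v = (uk1 - v) + w := by abel
    rw [this, norm_add_sq_real]
  have hw2 : (0:ℝ) ≤ ‖w‖ ^ 2 := sq_nonneg _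
  rw [hnorm]
  rw [hinner] at *
  nlinarith [Aw, Ax, Ay]
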